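/- arXiv:2508.00154 — 3 statements merged into one kernel-verified Lean document; each statement's English description precedes it below -/
import Mathlib

section
/- Let P be a symmetric positive definite n×n matrix, F a row vector (1×n matrix), and g > 0 a scalar. The ellipsoid E(P,0) = {x ∈ ℝⁿ : xᵀ P⁻¹ x ≤ 1} is contained in the half-space {x : Fx ≤ g} if and only if F P Fᵀ ≤ g². -/
/-!
Cauchy–Schwarz for the inner product `⟪u, v⟫ = uᵀ P⁻¹ v`, applied to `x` and `P F` (whose
`P⁻¹`-pairing with `x` is `F x`), gives `(F x)² ≤ (F P Fᵀ) (xᵀ P⁻¹ x)`, so the maximum of `F x`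
on the ellipsoid is at most `√(F P Fᵀ)`; it is attained at `x = P Fᵀ / √(F P Fᵀ)`.
-/

open Matrix

theorem Matrix.PosSemidef.sq_dotProduct_mulVec_le {ι : Type*} [Fintype ι]
    {M : Matrix ι ι ℝ} (hM : M.PosSemidef) (x y : ι → ℝ) :
    (x ⬝ᵥ M *ᵥ y) ^ 2 ≤ (x ⬝ᵥ M *ᵥ x) * (y ⬝ᵥ M *ᵥ y) := by
  let := M.toSeminormedAddCommGroup hM
  let := M.toInnerProductSpace hM
  have inner_eq (u v : ι → ℝ) : inner ℝ u v = u ⬝ᵥ M *ᵥ v := dotProduct_comm _ _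
  simpa only [sq, inner_eq] using real_inner_mul_inner_self_le x y

section PosDef

variable {ι : Type*} [Fintype ι] [DecidableEq ι] {P : Matrix ι ι ℝ}

theorem Matrix.PosDef.inv_mulVec_mulVec (hP : P.PosDef) (v : ι → ℝ) : P⁻¹ *ᵥ P *ᵥ v = v := by
  rw [mulVec_mulVec, nonsing_inv_mul P (isUnit_iff_isUnit_det P |>.1 hP.isUnit), one_mulVec]

theorem Matrix.PosDef.sq_dotProduct_le (hP : P.PosDef) (F x : ι → ℝ) :
    (F ⬝ᵥ x) ^ 2 ≤ (F ⬝ᵥ P *ᵥ F) * (x ⬝ᵥ P⁻¹ *ᵥ x) := by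
  have := hP.inv.posSemidef.sq_dotProduct_mulVec_le x (P *ᵥ F)
  rwa [hP.inv_mulVec_mulVec, dotProduct_comm x, dotProduct_comm (P *ᵥ F), mul_comm] at this

theorem Matrix.PosDef.exists_dotProduct_eq_sqrt (hP : P.PosDef) (F : ι → ℝ) :
    ∃ x, x ⬝ᵥ P⁻¹ *ᵥ x ≤ 1 ∧ F ⬝ᵥ x = √(F ⬝ᵥ P *ᵥ F) := by
  set C := F ⬝ᵥ P *ᵥ F
  have hC : 0 ≤ C := by simpa using hP.posSemidef.dotProduct_mulVec_nonneg F
  rcases hC.eq_or_lt with hC0 | hCpos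
  · exact ⟨0, by simp, by simp [← hC0]⟩
  have hsqrt : √C * √C = C := Real.mul_self_sqrt hCpos.le
  refine ⟨(√C)⁻¹ • P *ᵥ F, le_of_eq ?_, ?_⟩
  · rw [mulVec_smul, hP.inv_mulVec_mulVec, smul_dotProduct, dotProduct_smul,
      dotProduct_comm (P *ᵥ F), smul_eq_mul, smul_eq_mul, ← mul_assoc, ← mul_inv, hsqrt,
      inv_mul_cancel₀ hCpos.ne']
  · rw [dotProduct_smul, smul_eq_mul, inv_mul_eq_iff_eq_mul₀ (Real.sqrt_pos.2 hCpos).ne', hsqrt]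

end PosDef

/-- The ellipsoid `{x : xᵀP⁻¹x ≤ 1}` is contained in the half-space `{x : Fx ≤ g}`
(with `g > 0`) iff `F P Fᵀ ≤ g²`. -/
theorem stmt2 {n : ℕ} (P : Matrix (Fin n) (Fin n) ℝ) (hP : P.PosDef)
    (F : Fin n → ℝ) (g : ℝ) (hg : 0 < g) :
    {x : Fin n → ℝ | x ⬝ᵥ P⁻¹ *ᵥ x ≤ 1} ⊆ {x : Fin n → ℝ | F ⬝ᵥ x ≤ g} ↔
      F ⬝ᵥ P *ᵥ F ≤ g ^ 2 := by
  constructor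
  · intro hsub
    obtain ⟨x, hx, hFx⟩ := hP.exists_dotProduct_eq_sqrt F
    have : √(F ⬝ᵥ P *ᵥ F) ≤ g := hFx ▸ hsub hx
    exact (Real.sqrt_le_left hg.le).1 this
  · intro hC x (hx : x ⬝ᵥ P⁻¹ *ᵥ x ≤ 1)
    have hsq : (F ⬝ᵥ x) ^ 2 ≤ g ^ 2 := calc
      (F ⬝ᵥ x) ^ 2 ≤ (F ⬝ᵥ P *ᵥ F) * (x ⬝ᵥ P⁻¹ *ᵥ x) := hP.sq_dotProduct_le F x
      _ ≤ F ⬝ᵥ P *ᵥ F := mul_le_of_le_one_right (hP.posSemidef.dotProduct_mulVec_nonneg F) hx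
      _ ≤ g ^ 2 := hC
    exact (abs_le_of_sq_le_sq' hsq hg.le).2
end

section
/- Let P₁,…,P_m be symmetric positive definite n×n matrices and let S_c = Co(E(P₁,0),…,E(P_m,0)) be the convex hull of the origin-centered ellipsoids E(Pⱼ,0). For any nonnegative coefficients α₁,…,α_m with ∑ⱼ αⱼ = 1, the ellipsoid E(∑ⱼ αⱼ Pⱼ, 0) is contained in S_c. -/
/-!
Write `x = Q w` with `Q = ∑ⱼ αⱼ Pⱼ`, so that `x = ∑ⱼ αⱼ (Pⱼ w)`. Since
`(Pⱼ w)ᵀ Pⱼ⁻¹ (Pⱼ w) = wᵀ Pⱼ w`, the point `Pⱼ w` lies in `E(Pⱼ)` scaled by `√(wᵀ Pⱼ w)`.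
By concavity of the square root, `∑ⱼ αⱼ √(wᵀ Pⱼ w) ≤ √(wᵀ Q w) = √(xᵀ Q⁻¹ x) ≤ 1`, so `x` is
a combination of points of the ellipsoids with nonnegative weights of total mass at most `1`;
as the convex hull also contains `0`, it contains `x`.
-/

open Matrix
open scoped Pointwise

theorem Convex.sum_smul_mem_of_zero_mem {E ι : Type*} [AddCommGroup E] [Module ℝ E]
    {C : Set E} (hC : Convex ℝ C) (h0 : 0 ∈ C) {s : Finset ι} {w : ι → ℝ} {z : ι → E}
    (hw : ∀ i ∈ s, 0 ≤ w i) (hw1 : ∑ i ∈ s, w i ≤ 1) (hz : ∀ i ∈ s, z i ∈ C) :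
    ∑ i ∈ s, w i • z i ∈ C := by
  rcases (Finset.sum_nonneg hw).eq_or_lt with hw0 | hwpos
  · rw [Finset.sum_eq_zero fun i hi => by
      rw [(Finset.sum_eq_zero_iff_of_nonneg hw).1 hw0.symm i hi, zero_smul]]
    exact h0
  · have h := hC.smul_mem_of_zero_mem h0 (hC.centerMass_mem hw hwpos hz) ⟨hwpos.le, hw1⟩
    rwa [Finset.centerMass, smul_smul, mul_inv_cancel₀ hwpos.ne', one_smul] at h

theorem Convex.sum_mem_of_mem_smul {E ι : Type*} [AddCommGroup E] [Module ℝ E]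
    {C : Set E} (hC : Convex ℝ C) (h0 : 0 ∈ C) {s : Finset ι} {w : ι → ℝ} {x : ι → E}
    (hw : ∀ i ∈ s, 0 ≤ w i) (hw1 : ∑ i ∈ s, w i ≤ 1) (hx : ∀ i ∈ s, x i ∈ w i • C) :
    ∑ i ∈ s, x i ∈ C := by
  choose! z hzC hz using fun i hi => Set.mem_smul_set.1 (hx i hi)
  rw [← Finset.sum_congr rfl hz]
  exact hC.sum_smul_mem_of_zero_mem h0 hw hw1 hzC

namespace Matrix

variable {ι κ : Type*}

theorem posDef_sum_smul {A : κ → Matrix ι ι ℝ} {s : Finset κ} {w : κ → ℝ}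
    (hA : ∀ j ∈ s, (A j).PosDef) (hw : ∀ j ∈ s, 0 ≤ w j) (hpos : ∃ j ∈ s, 0 < w j) :
    (∑ j ∈ s, w j • A j).PosDef := by
  classical
  rw [← Finset.sum_filter_of_ne (p := fun j => 0 < w j) fun j hj hne =>
    (hw j hj).lt_of_ne' fun h => hne (by rw [h, zero_smul])]
  obtain ⟨j, hj, hwj⟩ := hpos
  exact posDef_sum ⟨j, Finset.mem_filter.2 ⟨hj, hwj⟩⟩ fun i hi =>
    (hA i (Finset.mem_filter.1 hi).1).smul (Finset.mem_filter.1 hi).2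

variable [Fintype ι]

theorem dotProduct_sum_smul_mulVec (A : κ → Matrix ι ι ℝ) (s : Finset κ) (w : κ → ℝ)
    (v : ι → ℝ) : v ⬝ᵥ (∑ j ∈ s, w j • A j) *ᵥ v = ∑ j ∈ s, w j * (v ⬝ᵥ A j *ᵥ v) := by
  simp [sum_mulVec, dotProduct_sum, smul_mulVec]

variable [DecidableEq ι]

def ellipsoid (P : Matrix ι ι ℝ) : Set (ι → ℝ) := {x | x ⬝ᵥ P⁻¹ *ᵥ x ≤ 1}

theorem zero_mem_ellipsoid (P : Matrix ι ι ℝ) : 0 ∈ ellipsoid P := by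
  simp [ellipsoid]

theorem PosDef.mem_smul_ellipsoid {P : Matrix ι ι ℝ} (hP : P.PosDef) {r : ℝ} (hr : 0 ≤ r)
    {x : ι → ℝ} (hx : x ⬝ᵥ P⁻¹ *ᵥ x ≤ r ^ 2) : x ∈ r • ellipsoid P := by
  rcases hr.eq_or_lt with rfl | hr
  · obtain rfl : x = 0 := by
      by_contra hx0
      have := hP.inv.dotProduct_mulVec_pos hx0
      simp only [star_trivial] at this
      linarith
    exact Set.zero_mem_smul_set (zero_mem_ellipsoid P)
  · refine Set.mem_smul_set.2 ⟨r⁻¹ • x, ?_, by rw [smul_smul, mul_inv_cancel₀ hr.ne', one_smul]⟩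
    show (r⁻¹ • x) ⬝ᵥ P⁻¹ *ᵥ (r⁻¹ • x) ≤ 1
    rw [mulVec_smul, dotProduct_smul, smul_dotProduct, smul_eq_mul, smul_eq_mul, ← mul_assoc,
      ← mul_inv, ← sq, inv_mul_le_one₀ (by positivity)]
    exact hx

theorem PosDef.mulVec_mem_smul_ellipsoid {P : Matrix ι ι ℝ} (hP : P.PosDef) (w : ι → ℝ) :
    P *ᵥ w ∈ √(w ⬝ᵥ P *ᵥ w) • ellipsoid P := by
  have hw : 0 ≤ w ⬝ᵥ P *ᵥ w := by simpa using hP.posSemidef.dotProduct_mulVec_nonneg w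
  refine hP.mem_smul_ellipsoid (Real.sqrt_nonneg _) ?_
  rw [Real.sq_sqrt hw, mulVec_mulVec, nonsing_inv_mul _ ((isUnit_iff_isUnit_det P).1 hP.isUnit),
    one_mulVec, dotProduct_comm]

end Matrix

/-- For positive definite `P₁,…,P_m` and convex coefficients `αⱼ`, the ellipsoid
with shape matrix `∑ⱼ αⱼ Pⱼ` is contained in the convex hull of the ellipsoids
`E(Pⱼ,0)`. -/
theorem stmt6 {n m : ℕ} (P : Fin m → Matrix (Fin n) (Fin n) ℝ)
    (hP : ∀ j, (P j).PosDef) (α : Fin m → ℝ)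
    (hα : ∀ j, 0 ≤ α j) (hα1 : ∑ j, α j = 1) :
    {x : Fin n → ℝ | x ⬝ᵥ (∑ j, α j • P j)⁻¹ *ᵥ x ≤ 1} ⊆
      convexHull ℝ (⋃ j, {x : Fin n → ℝ | x ⬝ᵥ (P j)⁻¹ *ᵥ x ≤ 1}) := by
  intro x hx
  obtain ⟨j₀, hj₀⟩ : ∃ j, 0 < α j := by
    by_contra! h
    simp [fun j => le_antisymm (h j) (hα j)] at hα1
  set Q := ∑ j, α j • P j
  have hQ : Q.PosDef :=
    posDef_sum_smul (fun j _ => hP j) (fun j _ => hα j) ⟨j₀, Finset.mem_univ _, hj₀⟩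
  set w := Q⁻¹ *ᵥ x
  have hQw : Q *ᵥ w = x := by
    rw [mulVec_mulVec, mul_nonsing_inv _ ((isUnit_iff_isUnit_det Q).1 hQ.isUnit), one_mulVec]
  have hform : ∀ j ∈ Finset.univ, 0 ≤ w ⬝ᵥ P j *ᵥ w := fun j _ => by
    simpa using (hP j).posSemidef.dotProduct_mulVec_nonneg w
  have hweights : ∑ j, α j * √(w ⬝ᵥ P j *ᵥ w) ≤ 1 := calc
    _ ≤ √(∑ j, α j * (w ⬝ᵥ P j *ᵥ w)) :=
        Real.strictConcaveOn_sqrt.concaveOn.le_map_sum (fun j _ => hα j) hα1 hform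
    _ = √(x ⬝ᵥ Q⁻¹ *ᵥ x) := by rw [← dotProduct_sum_smul_mulVec, hQw, dotProduct_comm]
    _ ≤ 1 := Real.sqrt_le_one.2 hx
  change x ∈ convexHull ℝ (⋃ j, ellipsoid (P j))
  rw [← hQw, sum_mulVec]
  refine (convex_convexHull ℝ _).sum_mem_of_mem_smul
    (subset_convexHull ℝ _ (Set.mem_iUnion.2 ⟨j₀, zero_mem_ellipsoid _⟩))
    (fun j _ => mul_nonneg (hα j) (Real.sqrt_nonneg _)) hweights fun j _ => ?_
  rw [smul_mulVec, mul_smul]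
  exact Set.smul_mem_smul_set <| Set.smul_set_mono
    ((Set.subset_iUnion _ j).trans (subset_convexHull ℝ _)) ((hP j).mulVec_mem_smul_ellipsoid w)
end

section
/- Suppose vectors ζ_{k} evolve by ζ_{k+1} = A_l ζ_k + A_n w_k where w_k satisfies wᵀ_k w_k ≤ ζᵀ_k Qᵀ Q ζ_k, ‖A_n‖₂ ≤ γ, γ² Qᵀ Q ⪯ P⁻¹, ε ≥ λ_max(P⁻¹), and (λ − ε(1+τ⁻¹)) P⁻¹ ⪰ (1+τ) A_lᵀ P⁻¹ A_l for some τ > 0 and 0 < λ ≤ 1 with λ − ε(1+τ⁻¹) > 0. Then ζᵀ_{k+1} P⁻¹ ζ_{k+1} ≤ λ ζᵀ_k P⁻¹ ζ_k; in particular the ellipsoid {ζ : ζᵀ P⁻¹ ζ ≤ 1} is λ-contractive (hence invariant) for the dynamics. -/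
open Matrix

/-!
Write `V ζ = ζᵀ P⁻¹ ζ`. Young's inequality `2aᵀP⁻¹b ≤ τ aᵀP⁻¹a + τ⁻¹ bᵀP⁻¹b` splits `V(A_l ζ + A_n w)`
into `(1 + τ) V(A_l ζ) + (1 + τ⁻¹) V(A_n w)`. The LMI bounds the first term by
`(λ - ε(1 + τ⁻¹)) V ζ`. For the second, `V(A_n w) ≤ ε |A_n w|² ≤ ε γ² |w|² ≤ ε γ² ζᵀQᵀQζ ≤ ε V ζ`,
and the two bounds add up to `λ V ζ`.
-/

namespace Matrix

variable {m n : Type*} [Fintype m] [Fintype n]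

lemma dotProduct_transpose_mul_mul_mulVec (A : Matrix m n ℝ) (M : Matrix m m ℝ) (x : n → ℝ) :
    x ⬝ᵥ (Aᵀ * M * A) *ᵥ x = (A *ᵥ x) ⬝ᵥ M *ᵥ (A *ᵥ x) := by
  rw [← mulVec_mulVec, ← mulVec_mulVec, dotProduct_mulVec x Aᵀ, ← mulVec_transpose,
    transpose_transpose]

lemma dotProduct_mulVec_le_of_posSemidef_sub {A B : Matrix n n ℝ} (h : (A - B).PosSemidef)
    (x : n → ℝ) : x ⬝ᵥ B *ᵥ x ≤ x ⬝ᵥ A *ᵥ x := by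
  have := h.dotProduct_mulVec_nonneg x
  rw [star_trivial, sub_mulVec, dotProduct_sub] at this
  linarith

lemma IsHermitian.dotProduct_mulVec_le_of_eigenvalues_le [DecidableEq n] {M : Matrix n n ℝ}
    (hM : M.IsHermitian) {ε : ℝ} (hε : ∀ i, hM.eigenvalues i ≤ ε) (x : n → ℝ) :
    x ⬝ᵥ M *ᵥ x ≤ ε * (x ⬝ᵥ x) := by
  open scoped MatrixOrder in
  have hle : M ≤ algebraMap ℝ _ ε := by
    refine le_algebraMap_of_spectrum_le ?_ hM
    rw [hM.spectrum_real_eq_range_eigenvalues]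
    rintro _ ⟨i, rfl⟩
    exact hε i
  simpa only [Algebra.algebraMap_eq_smul_one, smul_mulVec, one_mulVec, dotProduct_smul,
    smul_eq_mul] using dotProduct_mulVec_le_of_posSemidef_sub hle x

lemma PosDef.dotProduct_mulVec_le_of_eigenvalues_le [DecidableEq n] {M : Matrix n n ℝ}
    (hM : M.PosDef) {ε : ℝ} (hε : ∀ i, hM.1.eigenvalues i ≤ ε) {x y : n → ℝ}
    (hxy : x ⬝ᵥ x ≤ y ⬝ᵥ M *ᵥ y) : x ⬝ᵥ M *ᵥ x ≤ ε * (y ⬝ᵥ M *ᵥ y) := by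
  rcases isEmpty_or_nonempty n with _ | ⟨⟨i⟩⟩
  · simp [dotProduct]
  calc x ⬝ᵥ M *ᵥ x ≤ ε * (x ⬝ᵥ x) := hM.1.dotProduct_mulVec_le_of_eigenvalues_le hε x
    _ ≤ ε * (y ⬝ᵥ M *ᵥ y) :=
      mul_le_mul_of_nonneg_left hxy ((hM.eigenvalues_pos i).le.trans (hε i))

lemma PosSemidef.dotProduct_mulVec_add_le {M : Matrix n n ℝ} (hM : M.PosSemidef) {τ : ℝ}
    (hτ : 0 < τ) (a b : n → ℝ) :
    (a + b) ⬝ᵥ M *ᵥ (a + b) ≤ (1 + τ) * (a ⬝ᵥ M *ᵥ a) + (1 + τ⁻¹) * (b ⬝ᵥ M *ᵥ b) := by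
  have hba : b ⬝ᵥ M *ᵥ a = a ⬝ᵥ M *ᵥ b := by
    rw [dotProduct_mulVec, ← mulVec_transpose, (isHermitian_iff_isSymm.mp hM.1).eq, dotProduct_comm]
  have hsq := hM.dotProduct_mulVec_nonneg (τ • a - b)
  simp only [star_trivial, mulVec_sub, mulVec_smul, dotProduct_sub, dotProduct_smul,
    sub_dotProduct, smul_dotProduct, smul_eq_mul, hba] at hsq
  simp only [mulVec_add, dotProduct_add, add_dotProduct, hba]
  set A := a ⬝ᵥ M *ᵥ a
  set B := a ⬝ᵥ M *ᵥ b
  set C := b ⬝ᵥ M *ᵥ b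
  have young : τ * A + τ⁻¹ * C - 2 * B = τ⁻¹ * (τ * (τ * A - B) - (τ * B - C)) := by
    field_simp
    ring
  nlinarith [mul_nonneg (inv_nonneg.mpr hτ.le) hsq]

end Matrix

lemma dotProduct_self_le_of_sqrt_le {m n : Type*} [Fintype m] [Fintype n] {x : m → ℝ}
    {y : n → ℝ} {γ : ℝ} (h : √(x ⬝ᵥ x) ≤ γ * √(y ⬝ᵥ y)) : x ⬝ᵥ x ≤ γ ^ 2 * (y ⬝ᵥ y) := by
  have := pow_le_pow_left₀ (Real.sqrt_nonneg _) h 2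
  rwa [mul_pow, Real.sq_sqrt (by simpa using dotProduct_self_star_nonneg x),
    Real.sq_sqrt (by simpa using dotProduct_self_star_nonneg y)] at this

theorem stmt12_general {p q : ℕ} (Al : Matrix (Fin p) (Fin p) ℝ)
    (An : Matrix (Fin p) (Fin q) ℝ) (Q : Matrix (Fin p) (Fin p) ℝ)
    (P : Matrix (Fin p) (Fin p) ℝ) (hP : P.PosDef)
    (γ ε τ lam : ℝ) (hτ : 0 < τ) (hlam0 : 0 < lam)
    (hAn : ∀ w : Fin q → ℝ,
      Real.sqrt ((An *ᵥ w) ⬝ᵥ (An *ᵥ w)) ≤ γ * Real.sqrt (w ⬝ᵥ w))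
    (hQP : (P⁻¹ - (γ ^ 2) • (Qᵀ * Q)).PosSemidef)
    (hεmax : ∀ i, hP.inv.1.eigenvalues i ≤ ε)
    (hLMI : ((lam - ε * (1 + τ⁻¹)) • P⁻¹ - (1 + τ) • (Alᵀ * P⁻¹ * Al)).PosSemidef) :
    ∀ ζ : Fin p → ℝ, ∀ w : Fin q → ℝ,
      w ⬝ᵥ w ≤ ζ ⬝ᵥ (Qᵀ * Q) *ᵥ ζ →
      ((Al *ᵥ ζ + An *ᵥ w) ⬝ᵥ P⁻¹ *ᵥ (Al *ᵥ ζ + An *ᵥ w) ≤ lam * (ζ ⬝ᵥ P⁻¹ *ᵥ ζ)) ∧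
      (ζ ⬝ᵥ P⁻¹ *ᵥ ζ ≤ 1 →
        (Al *ᵥ ζ + An *ᵥ w) ⬝ᵥ (lam • P)⁻¹ *ᵥ (Al *ᵥ ζ + An *ᵥ w) ≤ 1) := by
  intro ζ w hw
  have hlin : (1 + τ) * ((Al *ᵥ ζ) ⬝ᵥ P⁻¹ *ᵥ (Al *ᵥ ζ)) ≤
      (lam - ε * (1 + τ⁻¹)) * (ζ ⬝ᵥ P⁻¹ *ᵥ ζ) := by
    simpa only [smul_mulVec, dotProduct_smul, smul_eq_mul,
      dotProduct_transpose_mul_mul_mulVec] using dotProduct_mulVec_le_of_posSemidef_sub hLMI ζ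
  have hQ : γ ^ 2 * (ζ ⬝ᵥ (Qᵀ * Q) *ᵥ ζ) ≤ ζ ⬝ᵥ P⁻¹ *ᵥ ζ := by
    simpa only [smul_mulVec, dotProduct_smul, smul_eq_mul] using
      dotProduct_mulVec_le_of_posSemidef_sub hQP ζ
  have hnonlin : (An *ᵥ w) ⬝ᵥ P⁻¹ *ᵥ (An *ᵥ w) ≤ ε * (ζ ⬝ᵥ P⁻¹ *ᵥ ζ) :=
    hP.inv.dotProduct_mulVec_le_of_eigenvalues_le hεmax <|
      (dotProduct_self_le_of_sqrt_le (hAn w)).trans <|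
        (mul_le_mul_of_nonneg_left hw (sq_nonneg γ)).trans hQ
  have hdecay : (Al *ᵥ ζ + An *ᵥ w) ⬝ᵥ P⁻¹ *ᵥ (Al *ᵥ ζ + An *ᵥ w) ≤ lam * (ζ ⬝ᵥ P⁻¹ *ᵥ ζ) :=
    calc _ ≤ (1 + τ) * ((Al *ᵥ ζ) ⬝ᵥ P⁻¹ *ᵥ (Al *ᵥ ζ)) +
          (1 + τ⁻¹) * ((An *ᵥ w) ⬝ᵥ P⁻¹ *ᵥ (An *ᵥ w)) :=
        hP.inv.posSemidef.dotProduct_mulVec_add_le hτ _ _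
      _ ≤ (lam - ε * (1 + τ⁻¹)) * (ζ ⬝ᵥ P⁻¹ *ᵥ ζ) + (1 + τ⁻¹) * (ε * (ζ ⬝ᵥ P⁻¹ *ᵥ ζ)) :=
        add_le_add hlin (mul_le_mul_of_nonneg_left hnonlin (by positivity))
      _ = lam * (ζ ⬝ᵥ P⁻¹ *ᵥ ζ) := by ring
  refine ⟨hdecay, fun hV => ?_⟩
  have hinv : (lam • P)⁻¹ = lam⁻¹ • P⁻¹ :=
    inv_smul' P (Units.mk0 lam hlam0.ne') (isUnit_iff_ne_zero.mpr hP.det_pos.ne')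
  rw [hinv, smul_mulVec, dotProduct_smul, smul_eq_mul, inv_mul_le_iff₀ hlam0]
  exact hdecay.trans (mul_le_mul_of_nonneg_left hV hlam0.le)

/-- λ-contractivity of the ellipsoid `{ζ : ζᵀP⁻¹ζ ≤ 1}` for the perturbed
dynamics `ζ⁺ = A_l ζ + A_n w` under the stated data-driven conditions. -/
theorem stmt12 {p q : ℕ} (Al : Matrix (Fin p) (Fin p) ℝ)
    (An : Matrix (Fin p) (Fin q) ℝ) (Q : Matrix (Fin p) (Fin p) ℝ)
    (P : Matrix (Fin p) (Fin p) ℝ) (hP : P.PosDef)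
    (γ ε τ lam : ℝ) (hγ : 0 ≤ γ) (hτ : 0 < τ) (hlam0 : 0 < lam) (hlam1 : lam ≤ 1)
    (hmargin : 0 < lam - ε * (1 + τ⁻¹))
    (hAn : ∀ w : Fin q → ℝ,
      Real.sqrt ((An *ᵥ w) ⬝ᵥ (An *ᵥ w)) ≤ γ * Real.sqrt (w ⬝ᵥ w))
    (hQP : (P⁻¹ - (γ ^ 2) • (Qᵀ * Q)).PosSemidef)
    (hεmax : ∀ i, hP.inv.1.eigenvalues i ≤ ε)
    (hLMI : ((lam - ε * (1 + τ⁻¹)) • P⁻¹ - (1 + τ) • (Alᵀ * P⁻¹ * Al)).PosSemidef) :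
    ∀ ζ : Fin p → ℝ, ∀ w : Fin q → ℝ,
      w ⬝ᵥ w ≤ ζ ⬝ᵥ (Qᵀ * Q) *ᵥ ζ →
      ((Al *ᵥ ζ + An *ᵥ w) ⬝ᵥ P⁻¹ *ᵥ (Al *ᵥ ζ + An *ᵥ w) ≤ lam * (ζ ⬝ᵥ P⁻¹ *ᵥ ζ)) ∧
      (ζ ⬝ᵥ P⁻¹ *ᵥ ζ ≤ 1 →
        (Al *ᵥ ζ + An *ᵥ w) ⬝ᵥ (lam • P)⁻¹ *ᵥ (Al *ᵥ ζ + An *ᵥ w) ≤ 1) :=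
  stmt12_general Al An Q P hP γ ε τ lam hτ hlam0 hAn hQP hεmax hLMI
end
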